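/- arXiv:2307.02159 — 4 statements merged into one kernel-verified Lean document; each statement's English description precedes it below -/
import Mathlib

section
/- Let q be a probability density on ℝᵏ, σ > 0, and γ ∈ (0,1), and set r = C_q(γ). Then for every x ∈ ℝᵏ with x ≠ 0, the σ-smoothed density satisfies the lower bound q(x;σ) ≥ γ · G_σ(x + r·x/‖x‖₂). -/
open MeasureTheory Real

/-- The centered Gaussian density `G_σ` on `ℝᵏ`:
`G_σ(x) = (2πσ²)^{-k/2} exp(-‖x‖₂²/(2σ²))`. -/
noncomputable def gaussDensity (k : ℕ) (σ : ℝ) (x : EuclideanSpace ℝ (Fin k)) : ℝ :=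
  (2 * Real.pi * σ ^ 2) ^ (-(k : ℝ) / 2) * Real.exp (-‖x‖ ^ 2 / (2 * σ ^ 2))

/-- `C_q(γ) = inf { s ≥ 0 : ∫_{B(s)} q(u) du ≥ γ }`, where `B(s)` is the closed ball of
radius `s` centered at the origin. -/
noncomputable def Cq (k : ℕ) (q : EuclideanSpace ℝ (Fin k) → ℝ) (γ : ℝ) : ℝ :=
  sInf {s : ℝ | 0 ≤ s ∧ γ ≤ ∫ u in Metric.closedBall (0 : EuclideanSpace ℝ (Fin k)) s, q u}

/-! Right-continuity of `s ↦ ∫_{B(s)} q` shows that the infimum `r = C_q(γ)` is attained, so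
`B(r)` carries mass at least `γ`. For `‖u‖ ≤ r` we have `‖x - u‖ ≤ ‖x‖ + r = ‖x + (r/‖x‖) x‖`, and
`G_σ` is radially non-increasing, so on `B(r)` the integrand `q(u) G_σ(x - u)` dominates
`q(u) G_σ(x + (r/‖x‖) x)`. -/

open Filter Topology Metric Set

theorem eventually_mem_closedBall_iff_nhdsGT {α : Type*} [PseudoMetricSpace α] (u c : α)
    (r : ℝ) :
    ∀ᶠ s in 𝓝[>] r, u ∈ closedBall c s ↔ u ∈ closedBall c r := by
  rcases le_or_gt (dist u c) r with hu | hu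
  · filter_upwards [self_mem_nhdsWithin] with s hs
    exact iff_of_true (mem_closedBall.2 (hu.trans (le_of_lt hs))) (mem_closedBall.2 hu)
  · filter_upwards [Ioo_mem_nhdsGT hu] with s hs
    exact iff_of_false (fun h => (mem_closedBall.1 h).not_gt hs.2)
      (fun h => (mem_closedBall.1 h).not_gt hu)

theorem tendsto_setIntegral_closedBall_nhdsGT {α E : Type*} [PseudoMetricSpace α]
    [MeasurableSpace α] [OpensMeasurableSpace α] [NormedAddCommGroup E] [NormedSpace ℝ E]
    {μ : Measure α} {f : α → E} (hf : Integrable f μ) (c : α) (r : ℝ) :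
    Tendsto (fun s : ℝ => ∫ u in closedBall c s, f u ∂μ) (𝓝[>] r)
      (𝓝 (∫ u in closedBall c r, f u ∂μ)) := by
  simp_rw [← integral_indicator measurableSet_closedBall]
  refine tendsto_integral_filter_of_dominated_convergence (fun u => ‖f u‖)
    (Eventually.of_forall fun s => hf.aestronglyMeasurable.indicator measurableSet_closedBall)
    (Eventually.of_forall fun s => ae_of_all _ fun u => norm_indicator_le_norm_self _ _)
    hf.norm (ae_of_all _ fun u => tendsto_const_nhds.congr' ?_)
  filter_upwards [eventually_mem_closedBall_iff_nhdsGT u c r] with s hs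
  classical
  rw [indicator_apply, indicator_apply, hs]

theorem Cq_nonneg (k : ℕ) (q : EuclideanSpace ℝ (Fin k) → ℝ) (γ : ℝ) : 0 ≤ Cq k q γ :=
  Real.sInf_nonneg fun _ hs => hs.1

theorem le_setIntegral_closedBall_Cq {k : ℕ} {q : EuclideanSpace ℝ (Fin k) → ℝ} {γ : ℝ}
    (hq_nonneg : ∀ u, 0 ≤ q u) (hq : Integrable q) (hγ : γ < ∫ u, q u) :
    γ ≤ ∫ u in closedBall 0 (Cq k q γ), q u := by
  set S := {s : ℝ | 0 ≤ s ∧ γ ≤ ∫ u in closedBall (0 : EuclideanSpace ℝ (Fin k)) s, q u}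
  have hS : S.Nonempty := by
    have hlim : Tendsto (fun s : ℝ => ∫ u in closedBall 0 s, q u) atTop (𝓝 (∫ u, q u)) :=
      (aecover_closedBall tendsto_id).integral_tendsto_of_countably_generated hq
    obtain ⟨s, hγs, hs⟩ :=
      ((hlim.eventually (eventually_gt_nhds hγ)).and (eventually_ge_atTop 0)).exists
    exact ⟨s, hs, hγs.le⟩
  refine ge_of_tendsto (tendsto_setIntegral_closedBall_nhdsGT hq 0 _) ?_
  filter_upwards [self_mem_nhdsWithin] with s (hs : sInf S < s)
  obtain ⟨t, ⟨-, hγt⟩, hts⟩ := exists_lt_of_csInf_lt hS hs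
  exact hγt.trans (setIntegral_mono_set hq.integrableOn (ae_of_all _ hq_nonneg)
    (ae_of_all _ (closedBall_subset_closedBall hts.le)))

theorem norm_add_div_norm_smul_self {E : Type*} [NormedAddCommGroup E] [NormedSpace ℝ E]
    {x : E} (hx : x ≠ 0) {r : ℝ} (hr : 0 ≤ r) : ‖x + (r / ‖x‖) • x‖ = ‖x‖ + r := by
  have hxn : 0 < ‖x‖ := norm_pos_iff.2 hx
  rw [show x + (r / ‖x‖) • x = (1 + r / ‖x‖) • x by rw [add_smul, one_smul], norm_smul,
    Real.norm_of_nonneg (by positivity)]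
  field_simp

theorem gaussDensity_nonneg (k : ℕ) (σ : ℝ) (x : EuclideanSpace ℝ (Fin k)) :
    0 ≤ gaussDensity k σ x := by
  unfold gaussDensity
  positivity

theorem gaussDensity_le_of_norm_le {k : ℕ} (σ : ℝ) {x y : EuclideanSpace ℝ (Fin k)}
    (h : ‖x‖ ≤ ‖y‖) : gaussDensity k σ y ≤ gaussDensity k σ x := by
  unfold gaussDensity
  gcongr

theorem continuous_gaussDensity (k : ℕ) (σ : ℝ) : Continuous (gaussDensity k σ) := by
  unfold gaussDensity
  fun_prop

theorem integrable_mul_gaussDensity_sub {k : ℕ} {q : EuclideanSpace ℝ (Fin k) → ℝ}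
    (hq : Integrable q) (σ : ℝ) (x : EuclideanSpace ℝ (Fin k)) :
    Integrable fun u => q u * gaussDensity k σ (x - u) :=
  hq.mul_bdd ((continuous_gaussDensity k σ).comp (continuous_sub_left x)).aestronglyMeasurable
    (ae_of_all _ fun u => by
      rw [Real.norm_of_nonneg (gaussDensity_nonneg k σ _)]
      exact gaussDensity_le_of_norm_le σ (x := 0) (by simp))

theorem setIntegral_mul_le_integral_mul {α : Type*} [MeasurableSpace α] {μ : Measure α}
    {f g : α → ℝ} {s : Set α} {c : ℝ} (hs : MeasurableSet s) (hf : Integrable f μ)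
    (hfg : Integrable (fun u => f u * g u) μ) (hf0 : ∀ u, 0 ≤ f u) (hg0 : ∀ u, 0 ≤ g u)
    (hcg : ∀ u ∈ s, c ≤ g u) :
    (∫ u in s, f u ∂μ) * c ≤ ∫ u, f u * g u ∂μ :=
  calc (∫ u in s, f u ∂μ) * c = ∫ u in s, f u * c ∂μ := (integral_mul_const c f).symm
    _ ≤ ∫ u in s, f u * g u ∂μ := setIntegral_mono_on (hf.mul_const c).integrableOn
        hfg.integrableOn hs fun u hu => mul_le_mul_of_nonneg_left (hcg u hu) (hf0 u)
    _ ≤ ∫ u, f u * g u ∂μ := setIntegral_le_integral hfg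
        (ae_of_all _ fun u => mul_nonneg (hf0 u) (hg0 u))

theorem smoothed_density_lower_bound_general (k : ℕ) (σ : ℝ)
    (γ : ℝ) (hγ : γ ∈ Set.Ioo (0 : ℝ) 1)
    (q : EuclideanSpace ℝ (Fin k) → ℝ)
    (hq_nonneg : ∀ u, 0 ≤ q u)
    (hq_int : ∫ u, q u = 1) :
    ∀ x : EuclideanSpace ℝ (Fin k), x ≠ 0 →
      γ * gaussDensity k σ (x + (Cq k q γ / ‖x‖) • x) ≤
        ∫ u, q u * gaussDensity k σ (x - u) := by
  intro x hx
  have hq : Integrable q := .of_integral_ne_zero (by simp [hq_int])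
  have hfar : ∀ u ∈ closedBall 0 (Cq k q γ),
      gaussDensity k σ (x + (Cq k q γ / ‖x‖) • x) ≤ gaussDensity k σ (x - u) := fun u hu =>
    gaussDensity_le_of_norm_le σ <| by
      rw [norm_add_div_norm_smul_self hx (Cq_nonneg k q γ)]
      exact (norm_sub_le x u).trans (by gcongr; exact mem_closedBall_zero_iff.1 hu)
  calc γ * gaussDensity k σ (x + (Cq k q γ / ‖x‖) • x)
      ≤ (∫ u in closedBall 0 (Cq k q γ), q u) * gaussDensity k σ (x + (Cq k q γ / ‖x‖) • x) :=
        mul_le_mul_of_nonneg_right (le_setIntegral_closedBall_Cq hq_nonneg hq (hq_int ▸ hγ.2))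
          (gaussDensity_nonneg k σ _)
    _ ≤ ∫ u, q u * gaussDensity k σ (x - u) :=
        setIntegral_mul_le_integral_mul measurableSet_closedBall hq
          (integrable_mul_gaussDensity_sub hq σ x) hq_nonneg (fun _ => gaussDensity_nonneg k σ _)
          hfar

/-- for a probability density `q` on `ℝᵏ`, `σ > 0`, `γ ∈ (0,1)` and
`r = C_q(γ)`, the σ-smoothed density satisfies, for every `x ≠ 0`,
`q(x;σ) ≥ γ · G_σ(x + r·x/‖x‖₂)`. -/
theorem smoothed_density_lower_bound (k : ℕ) (σ : ℝ) (hσ : 0 < σ)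
    (γ : ℝ) (hγ : γ ∈ Set.Ioo (0 : ℝ) 1)
    (q : EuclideanSpace ℝ (Fin k) → ℝ)
    (hq_nonneg : ∀ u, 0 ≤ q u) (hq_meas : Measurable q)
    (hq_int : ∫ u, q u = 1) :
    ∀ x : EuclideanSpace ℝ (Fin k), x ≠ 0 →
      γ * gaussDensity k σ (x + (Cq k q γ / ‖x‖) • x) ≤
        ∫ u, q u * gaussDensity k σ (x - u) :=
  smoothed_density_lower_bound_general k σ γ hγ q hq_nonneg hq_int
end

section
/- Let q be a probability density on ℝᵏ, σ > 0, and γ ∈ (0,1). Set A_σ = 1/(2σ²), B_σ = C_q(γ)/σ², and C_σ = max{ C_q(γ)²/(2σ²) − log(γ · (2π)^{−k/2} σ^{−k}), log((2π)^{−k/2} σ^{−k}) }. Then for every x ∈ ℝᵏ, the σ-smoothed density satisfies |log q(x;σ)| ≤ A_σ ‖x‖₂² + B_σ ‖x‖₂ + C_σ. -/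
open MeasureTheory Real

lemma Cq_spec (k : ℕ) (γ : ℝ) (hγ0 : 0 < γ) (hγ1 : γ < 1)
    (q : EuclideanSpace ℝ (Fin k) → ℝ) (hq_nonneg : ∀ u, 0 ≤ q u)
    (hqInt : Integrable q) (hq_int : ∫ u, q u = 1) :
    0 ≤ Cq k q γ ∧ γ ≤ ∫ u in Metric.closedBall (0 : EuclideanSpace ℝ (Fin k)) (Cq k q γ), q u := by
  set S := {s : ℝ | 0 ≤ s ∧ γ ≤ ∫ u in Metric.closedBall (0 : EuclideanSpace ℝ (Fin k)) s, q u}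
    with hS
  have hmono : ∀ {a b : ℝ}, a ≤ b →
      (∫ u in Metric.closedBall (0 : EuclideanSpace ℝ (Fin k)) a, q u) ≤
      (∫ u in Metric.closedBall (0 : EuclideanSpace ℝ (Fin k)) b, q u) := by
    intro a b hab
    refine setIntegral_mono_set hqInt.integrableOn ?_ ?_
    · exact Filter.Eventually.of_forall fun u => hq_nonneg u
    · exact Filter.Eventually.of_forall (Metric.closedBall_subset_closedBall hab)
  have hne : S.Nonempty := by
    have hUnion : (⋃ n : ℕ, Metric.closedBall (0 : EuclideanSpace ℝ (Fin k)) (n : ℝ)) =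
        Set.univ := by
      ext y
      simp only [Set.mem_iUnion, Metric.mem_closedBall, dist_zero_right, Set.mem_univ, iff_true]
      exact exists_nat_ge ‖y‖
    have htend := tendsto_setIntegral_of_monotone
      (s := fun n : ℕ => Metric.closedBall (0 : EuclideanSpace ℝ (Fin k)) (n : ℝ))
      (fun n => Metric.isClosed_closedBall.measurableSet)
      (fun a b hab => Metric.closedBall_subset_closedBall (Nat.cast_le.mpr hab))
      (hqInt.integrableOn)
    rw [hUnion, setIntegral_univ, hq_int] at htend
    have hev := htend.eventually (eventually_gt_nhds hγ1)
    obtain ⟨n, hn⟩ := hev.exists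
    exact ⟨(n : ℝ), Nat.cast_nonneg n, hn.le⟩
  have hbdd : BddBelow S := ⟨0, fun s hs => hs.1⟩
  have hR0 : 0 ≤ sInf S := le_csInf hne fun s hs => hs.1
  refine ⟨hR0, ?_⟩
  -- for every t > sInf S, γ ≤ ∫ over ball t
  have hgt : ∀ t : ℝ, sInf S < t →
      γ ≤ ∫ u in Metric.closedBall (0 : EuclideanSpace ℝ (Fin k)) t, q u := by
    intro t ht
    obtain ⟨s, hsS, hst⟩ := (csInf_lt_iff hbdd hne).mp ht
    exact hsS.2.trans (hmono hst.le)
  have hanti : Antitone fun n : ℕ =>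
      Metric.closedBall (0 : EuclideanSpace ℝ (Fin k)) (sInf S + 1 / (n + 1)) := by
    intro a b hab
    refine Metric.closedBall_subset_closedBall (by
      have hab' : (a : ℝ) ≤ b := Nat.cast_le.mpr hab
      have : (1 : ℝ) / (b + 1) ≤ 1 / (a + 1) := by
        apply one_div_le_one_div_of_le (by positivity)
        linarith
      linarith)
  have hiInter : (⋂ n : ℕ, Metric.closedBall (0 : EuclideanSpace ℝ (Fin k))
      (sInf S + 1 / (n + 1))) = Metric.closedBall 0 (sInf S) := by
    ext y
    simp only [Set.mem_iInter, Metric.mem_closedBall, dist_zero_right]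
    constructor
    · intro h
      by_contra hcon
      push_neg at hcon
      obtain ⟨n, hn⟩ := exists_nat_one_div_lt (show 0 < ‖y‖ - sInf S by linarith)
      have := h n
      push_cast at this hn
      linarith
    · intro h n
      have : (0:ℝ) < 1 / ((n:ℝ) + 1) := by positivity
      linarith
  have htend := tendsto_setIntegral_of_antitone
    (s := fun n : ℕ => Metric.closedBall (0 : EuclideanSpace ℝ (Fin k)) (sInf S + 1 / (n + 1)))
    (fun n => Metric.isClosed_closedBall.measurableSet) hanti ⟨0, hqInt.integrableOn⟩
  rw [hiInter] at htend
  refine ge_of_tendsto htend (Filter.Eventually.of_forall fun n => ?_)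
  exact hgt _ (lt_add_of_pos_right _ (by positivity))

/-- quadratic growth bound on the log-density of the σ-smoothed distribution:
`|log q(x;σ)| ≤ A_σ ‖x‖² + B_σ ‖x‖ + C_σ` with
`A_σ = 1/(2σ²)`, `B_σ = C_q(γ)/σ²` and
`C_σ = max{ C_q(γ)²/(2σ²) − log(γ (2π)^{-k/2} σ^{-k}), log((2π)^{-k/2} σ^{-k}) }`. -/
theorem log_smoothed_density_quadratic_growth (k : ℕ) (σ : ℝ) (hσ : 0 < σ)
    (γ : ℝ) (hγ : γ ∈ Set.Ioo (0 : ℝ) 1)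
    (q : EuclideanSpace ℝ (Fin k) → ℝ)
    (hq_nonneg : ∀ u, 0 ≤ q u) (hq_meas : Measurable q)
    (hq_int : ∫ u, q u = 1)
    (hpos : ∀ x : EuclideanSpace ℝ (Fin k), 0 < ∫ u, q u * gaussDensity k σ (x - u)) :
    ∀ x : EuclideanSpace ℝ (Fin k),
      |Real.log (∫ u, q u * gaussDensity k σ (x - u))| ≤
        (1 / (2 * σ ^ 2)) * ‖x‖ ^ 2 + (Cq k q γ / σ ^ 2) * ‖x‖ +
          max ((Cq k q γ) ^ 2 / (2 * σ ^ 2)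
                - Real.log (γ * ((2 * Real.pi) ^ (-(k : ℝ) / 2) * σ ^ (-(k : ℝ)))))
              (Real.log ((2 * Real.pi) ^ (-(k : ℝ) / 2) * σ ^ (-(k : ℝ)))) := by
  intro x
  obtain ⟨hγ0, hγ1⟩ := hγ
  set M : ℝ := (2 * Real.pi) ^ (-(k : ℝ) / 2) * σ ^ (-(k : ℝ)) with hMdef
  have hqInt : Integrable q := by
    by_contra h
    rw [integral_undef h] at hq_int
    norm_num at hq_int
  have hM_pos : 0 < M := by
    apply mul_pos <;> apply Real.rpow_pos_of_pos
    · positivity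
    · exact hσ
  have hGeq : ∀ y : EuclideanSpace ℝ (Fin k),
      gaussDensity k σ y = M * Real.exp (-‖y‖ ^ 2 / (2 * σ ^ 2)) := by
    intro y
    unfold gaussDensity
    congr 1
    rw [Real.mul_rpow (by positivity) (by positivity), hMdef]
    congr 1
    rw [← Real.rpow_natCast σ 2, ← Real.rpow_mul hσ.le]
    congr 1
    ring
  have hGpos : ∀ y : EuclideanSpace ℝ (Fin k), 0 < gaussDensity k σ y := by
    intro y; rw [hGeq]; positivity
  have hGle : ∀ y : EuclideanSpace ℝ (Fin k), gaussDensity k σ y ≤ M := by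
    intro y
    rw [hGeq]
    nth_rewrite 2 [← mul_one M]
    refine mul_le_mul_of_nonneg_left (Real.exp_le_one_iff.mpr ?_) hM_pos.le
    apply div_nonpos_of_nonpos_of_nonneg
    · simp [sq_nonneg]
    · positivity
  have hGcont : Continuous fun u : EuclideanSpace ℝ (Fin k) => gaussDensity k σ (x - u) := by
    unfold gaussDensity
    fun_prop
  have hint : Integrable fun u => q u * gaussDensity k σ (x - u) := by
    refine Integrable.mono' (hqInt.const_mul M)
      (hq_meas.aestronglyMeasurable.mul hGcont.aestronglyMeasurable)
      (Filter.Eventually.of_forall fun u => ?_)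
    rw [Real.norm_eq_abs, abs_of_nonneg (mul_nonneg (hq_nonneg u) (hGpos _).le), mul_comm M]
    exact mul_le_mul_of_nonneg_left (hGle _) (hq_nonneg u)
  have hub : (∫ u, q u * gaussDensity k σ (x - u)) ≤ M := by
    calc (∫ u, q u * gaussDensity k σ (x - u)) ≤ ∫ u, M * q u := by
          refine integral_mono hint (hqInt.const_mul M) fun u => ?_
          rw [mul_comm M]
          exact mul_le_mul_of_nonneg_left (hGle _) (hq_nonneg u)
      _ = M := by rw [integral_const_mul, hq_int, mul_one]
  obtain ⟨hR0, hRmem⟩ := Cq_spec k γ hγ0 hγ1 q hq_nonneg hqInt hq_int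
  set R : ℝ := Cq k q γ with hRdef
  set c : ℝ := M * Real.exp (-(‖x‖ + R) ^ 2 / (2 * σ ^ 2)) with hcdef
  have hc_pos : 0 < c := by positivity
  have hlb : γ * c ≤ ∫ u, q u * gaussDensity k σ (x - u) := by
    have h1 : γ * c ≤ ∫ u in Metric.closedBall (0 : EuclideanSpace ℝ (Fin k)) R, q u * c := by
      rw [integral_mul_const]
      rw [mul_comm γ c, mul_comm _ c]
      exact mul_le_mul_of_nonneg_left hRmem hc_pos.le
    have h2 : (∫ u in Metric.closedBall (0 : EuclideanSpace ℝ (Fin k)) R, q u * c) ≤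
        ∫ u in Metric.closedBall (0 : EuclideanSpace ℝ (Fin k)) R,
          q u * gaussDensity k σ (x - u) := by
      refine setIntegral_mono_on (hqInt.mul_const c).integrableOn hint.integrableOn
        Metric.isClosed_closedBall.measurableSet fun u hu => ?_
      refine mul_le_mul_of_nonneg_left ?_ (hq_nonneg u)
      rw [hGeq, hcdef]
      have hxu : ‖x - u‖ ≤ ‖x‖ + R := by
        refine (norm_sub_le x u).trans ?_
        have : ‖u‖ ≤ R := by simpa [dist_zero_right] using hu
        linarith
      gcongr
    have h3 : (∫ u in Metric.closedBall (0 : EuclideanSpace ℝ (Fin k)) R,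
        q u * gaussDensity k σ (x - u)) ≤ ∫ u, q u * gaussDensity k σ (x - u) :=
      setIntegral_le_integral hint
        (Filter.Eventually.of_forall fun u => mul_nonneg (hq_nonneg u) (hGpos _).le)
    linarith
  have hf0 := hpos x
  rw [abs_le]
  constructor
  · -- lower bound on log f
    have hlog : Real.log (γ * M) + -(‖x‖ + R) ^ 2 / (2 * σ ^ 2) ≤
        Real.log (∫ u, q u * gaussDensity k σ (x - u)) := by
      have := Real.log_le_log (by positivity) hlb
      rw [hcdef, show γ * (M * Real.exp (-(‖x‖ + R) ^ 2 / (2 * σ ^ 2))) =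
        (γ * M) * Real.exp (-(‖x‖ + R) ^ 2 / (2 * σ ^ 2)) by ring,
        Real.log_mul (by positivity) (Real.exp_pos _).ne', Real.log_exp] at this
      exact this
    have hexpand : (‖x‖ + R) ^ 2 / (2 * σ ^ 2) =
        1 / (2 * σ ^ 2) * ‖x‖ ^ 2 + R / σ ^ 2 * ‖x‖ + R ^ 2 / (2 * σ ^ 2) := by
      field_simp
      ring
    have hmax := le_max_left (R ^ 2 / (2 * σ ^ 2) - Real.log (γ * M)) (Real.log M)
    have : -(‖x‖ + R) ^ 2 / (2 * σ ^ 2) = -((‖x‖ + R) ^ 2 / (2 * σ ^ 2)) := by ring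
    rw [this] at hlog
    linarith
  · have hAB : 0 ≤ 1 / (2 * σ ^ 2) * ‖x‖ ^ 2 + R / σ ^ 2 * ‖x‖ := by positivity
    have hmax := le_max_right (R ^ 2 / (2 * σ ^ 2) - Real.log (γ * M)) (Real.log M)
    have := Real.log_le_log hf0 hub
    linarith
end

section
/- (Marginal Preserving Property, Fokker–Planck form.) Let p : ℝᵏ → (0,∞) be twice continuously differentiable, let b : ℝᵏ → ℝᵏ be a continuously differentiable vector field, and let g, λ ∈ ℝ. Then for every x ∈ ℝᵏ: −div( p(x) · ( b(x) + (g²/2) ∇log p(x) ) ) + ((g² − λ²)/2) Δp(x) = −div( p(x) b(x) ) − (λ²/2) Δp(x). In particular, the left-hand side (the Fokker–Planck right-hand side of the DiffFlow SDE with drift b + (g²/2)∇log p and diffusion coefficient √(g²−λ²)) is independent of g. -/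
open Real

/-- The divergence of a vector field `V : ℝᵏ → ℝᵏ` at `x`:
`div V (x) = ∑ᵢ ∂ᵢ Vᵢ (x)`. -/
noncomputable def divergence {k : ℕ}
    (V : EuclideanSpace ℝ (Fin k) → EuclideanSpace ℝ (Fin k))
    (x : EuclideanSpace ℝ (Fin k)) : ℝ :=
  ∑ i : Fin k, fderiv ℝ V x (EuclideanSpace.single i 1) i

/-- The Laplacian `Δp = div(∇p)`. -/
noncomputable def laplacian {k : ℕ}
    (p : EuclideanSpace ℝ (Fin k) → ℝ) (x : EuclideanSpace ℝ (Fin k)) : ℝ :=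
  divergence (fun y => gradient p y) x

/-! Since `p • ∇(log p) = ∇p` wherever `p ≠ 0`, the score part of the drift is `(g²/2) ∇p`, whose
divergence `(g²/2) Δp` cancels the `g²` part of the diffusion term. -/

section Gradient

variable {F : Type*} [NormedAddCommGroup F] [InnerProductSpace ℝ F] [CompleteSpace F]

theorem gradient_log_comp {f : F → ℝ} {x : F} (hf : DifferentiableAt ℝ f x) (hx : f x ≠ 0) :
    gradient (fun y => Real.log (f y)) x = (f x)⁻¹ • gradient f x := by
  rw [gradient, (hf.hasFDerivAt.log hx).fderiv, gradient, map_smul]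

theorem smul_gradient_log_comp {f : F → ℝ} {x : F} (hf : DifferentiableAt ℝ f x)
    (hx : f x ≠ 0) : f x • gradient (fun y => Real.log (f y)) x = gradient f x := by
  rw [gradient_log_comp hf hx, smul_inv_smul₀ hx]

theorem ContDiff.gradient {f : F → ℝ} {n : WithTop ℕ∞} (hf : ContDiff ℝ (n + 1) f) :
    ContDiff ℝ n (gradient f) :=
  (InnerProductSpace.toDual ℝ F).symm.contDiff.comp (hf.fderiv_right le_rfl)

end Gradient

section Divergence

variable {k : ℕ} {V W : EuclideanSpace ℝ (Fin k) → EuclideanSpace ℝ (Fin k)}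
  {x : EuclideanSpace ℝ (Fin k)}

theorem divergence_add (hV : DifferentiableAt ℝ V x) (hW : DifferentiableAt ℝ W x) :
    divergence (fun y => V y + W y) x = divergence V x + divergence W x := by
  simp only [divergence, fderiv_fun_add hV hW, add_apply, PiLp.add_apply,
    Finset.sum_add_distrib]

theorem divergence_const_smul (c : ℝ) (hV : DifferentiableAt ℝ V x) :
    divergence (fun y => c • V y) x = c * divergence V x := by
  simp only [divergence, fderiv_fun_const_smul hV, smul_apply, PiLp.smul_apply,
    smul_eq_mul, Finset.mul_sum]

end Divergence

/-- Marginal Preserving Property, Fokker–Planck form: for a twice continuously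
differentiable `p : ℝᵏ → (0,∞)`, a `C¹` vector field `b` and reals `g, λ`,
`−div(p(b + (g²/2)∇log p)) + ((g² − λ²)/2)Δp = −div(p b) − (λ²/2)Δp`;
in particular the Fokker–Planck right-hand side of the DiffFlow SDE is independent of `g`. -/
theorem marginal_preserving_property (k : ℕ)
    (p : EuclideanSpace ℝ (Fin k) → ℝ)
    (b : EuclideanSpace ℝ (Fin k) → EuclideanSpace ℝ (Fin k))
    (hp : ContDiff ℝ 2 p) (hp_pos : ∀ x, 0 < p x)
    (hb : ContDiff ℝ 1 b) (g lam : ℝ) :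
    ∀ x : EuclideanSpace ℝ (Fin k),
      -divergence (fun y =>
          p y • (b y + (g ^ 2 / 2) • gradient (fun z => Real.log (p z)) y)) x
        + ((g ^ 2 - lam ^ 2) / 2) * laplacian p x =
      -divergence (fun y => p y • b y) x - (lam ^ 2 / 2) * laplacian p x := by
  intro x
  have hp_diff : Differentiable ℝ p := hp.differentiable (by norm_num)
  have hfield : (fun y => p y • (b y + (g ^ 2 / 2) • gradient (fun z => Real.log (p z)) y))
      = fun y => p y • b y + (g ^ 2 / 2) • gradient p y := by
    funext y
    rw [smul_add, smul_comm, smul_gradient_log_comp (hp_diff y) (hp_pos y).ne']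
  have hpb : DifferentiableAt ℝ (fun y => p y • b y) x :=
    (hp_diff x).smul (hb.differentiable one_ne_zero x)
  have hgrad : DifferentiableAt ℝ (gradient p) x :=
    (ContDiff.gradient (n := 1) hp).differentiable one_ne_zero x
  have hgrad_smul : DifferentiableAt ℝ (fun y => (g ^ 2 / 2) • gradient p y) x :=
    hgrad.fun_const_smul _
  rw [hfield, divergence_add hpb hgrad_smul, divergence_const_smul _ hgrad, laplacian]
  ring
end

section
/- For any a, b > 0, the function φ : ℝ → ℝ given by φ(d) = a·log(1 + e^{−d}) + b·log(1 + e^{d}) is strictly convex and attains its unique global minimum at d* = log(a/b); that is, φ(d) > φ(log(a/b)) for all d ≠ log(a/b). -/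
/-!
The derivative of `d ↦ log (1 + exp d)` is the sigmoid `σ`, and `σ (-d) = 1 - σ d`, so the loss
has derivative `(a + b) σ(d) - a`. This is strictly increasing, whence strict convexity, and it
vanishes exactly where `σ(d) = a / (a + b)`, i.e. at `d = log (a / b)`. A strictly convex function
is strictly minimised at any critical point.
-/

open Real Set

lemma Real.hasDerivAt_log_one_add_exp (x : ℝ) :
    HasDerivAt (fun x => log (1 + exp x)) (sigmoid x) x := by
  convert ((hasDerivAt_exp x).const_add 1).log (by positivity) using 1
  rw [sigmoid_def, exp_neg]
  field_simp
  ring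

lemma Real.sigmoid_log_div {a b : ℝ} (ha : 0 < a) (hb : 0 < b) :
    sigmoid (log (a / b)) = a / (a + b) := by
  rw [sigmoid_def, ← log_inv, exp_log (by positivity), inv_div]
  field_simp

lemma StrictConvexOn.lt_of_hasDerivAt_eq_zero {S : Set ℝ} {f : ℝ → ℝ} {x y : ℝ}
    (hf : StrictConvexOn ℝ S f) (hx : x ∈ S) (hy : y ∈ S) (hf' : HasDerivAt f 0 x)
    (hyx : y ≠ x) : f x < f y := by
  rcases hyx.lt_or_gt with hlt | hgt
  · have hslope := hf.slope_lt_of_hasDerivAt hy hx hlt hf'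
    rw [slope_def_field, div_lt_iff₀ (sub_pos.2 hlt)] at hslope
    linarith
  · have hslope := hf.lt_slope_of_hasDerivAt hx hy hgt hf'
    rw [slope_def_field, lt_div_iff₀ (sub_pos.2 hgt)] at hslope
    linarith

noncomputable def logisticLoss (a b d : ℝ) : ℝ := a * log (1 + exp (-d)) + b * log (1 + exp d)

lemma hasDerivAt_logisticLoss (a b d : ℝ) :
    HasDerivAt (logisticLoss a b) ((a + b) * sigmoid d - a) d := by
  refine ((((hasDerivAt_log_one_add_exp (-d)).comp d (hasDerivAt_neg d)).const_mul a).add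
    ((hasDerivAt_log_one_add_exp d).const_mul b)).congr_deriv ?_
  rw [sigmoid_neg]
  ring

lemma strictConvexOn_logisticLoss {a b : ℝ} (hab : 0 < a + b) :
    StrictConvexOn ℝ univ (logisticLoss a b) := by
  have hderiv : deriv (logisticLoss a b) = fun d => (a + b) * sigmoid d - a :=
    funext fun d => (hasDerivAt_logisticLoss a b d).deriv
  refine StrictMono.strictConvexOn_univ_of_deriv ?_ ?_
  · exact continuous_iff_continuousAt.2 fun d => (hasDerivAt_logisticLoss a b d).continuousAt
  · rw [hderiv]
    intro x y hxy
    have := mul_lt_mul_of_pos_left (sigmoid_strictMono hxy) hab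
    linarith

lemma logisticLoss_log_div_lt {a b : ℝ} (ha : 0 < a) (hb : 0 < b) {d : ℝ}
    (hd : d ≠ log (a / b)) : logisticLoss a b (log (a / b)) < logisticLoss a b d := by
  refine (strictConvexOn_logisticLoss (add_pos ha hb)).lt_of_hasDerivAt_eq_zero
    (mem_univ _) (mem_univ _) ?_ hd
  refine (hasDerivAt_logisticLoss a b _).congr_deriv ?_
  rw [sigmoid_log_div ha hb]
  field_simp
  ring

/-- for `a, b > 0`, the function
`φ(d) = a·log(1 + e^{−d}) + b·log(1 + e^{d})` is strictly convex on `ℝ` and attains its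
unique global minimum at `d* = log(a/b)`: `φ(d) > φ(log(a/b))` for all `d ≠ log(a/b)`. -/
theorem logistic_loss_strictConvex_and_unique_min (a b : ℝ) (ha : 0 < a) (hb : 0 < b) :
    StrictConvexOn ℝ Set.univ
      (fun d : ℝ => a * Real.log (1 + Real.exp (-d)) + b * Real.log (1 + Real.exp d)) ∧
    ∀ d : ℝ, d ≠ Real.log (a / b) →
      a * Real.log (1 + Real.exp (-(Real.log (a / b)))) +
          b * Real.log (1 + Real.exp (Real.log (a / b))) <
        a * Real.log (1 + Real.exp (-d)) + b * Real.log (1 + Real.exp d) :=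
  ⟨strictConvexOn_logisticLoss (add_pos ha hb), fun _ hd => logisticLoss_log_div_lt ha hb hd⟩
end
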